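/- arXiv:2403.03830 — 2 statements merged into one kernel-verified Lean document; each statement's English description precedes it below -/
import Mathlib

section
/- Let G be a cluster graph that is not η-balanced, and suppose there exists a set F of non-edges of G with |F| ≤ k such that G+F is an η-balanced cluster graph. Then the smallest connected component of G has at most k vertices, and the largest connected component of G has at most 2k+η vertices. -/
open SimpleGraph

/-- A graph is a cluster graph if every connected component is a clique
(equivalently, it has no induced `P₃`). -/
def IsClusterGraph {V : Type*} (G : SimpleGraph V) : Prop :=
  ∀ ⦃u v w : V⦄, G.Adj u v → G.Adj v w → u ≠ w → G.Adj u w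

/-- `G + F`: the graph obtained from `G` by adding the pairs in `F` as edges. -/
def addEdges {V : Type*} (G : SimpleGraph V) (F : Set (Sym2 V)) : SimpleGraph V :=
  G ⊔ SimpleGraph.fromEdgeSet F

/-- `F` modifies the vertex `v` if some pair of `F` contains `v`. -/
def ModifiesVertex {V : Type*} (F : Set (Sym2 V)) (v : V) : Prop :=
  ∃ e ∈ F, v ∈ e

/-- `F` modifies the connected component `c` if it modifies some vertex of `c`. -/
def ModifiesComponent {V : Type*} {G : SimpleGraph V} (F : Set (Sym2 V))
    (c : G.ConnectedComponent) : Prop :=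
  ∃ v ∈ c.supp, ModifiesVertex F v


/-- A graph is `η`-balanced if the numbers of vertices of any two of its connected
components differ by at most `η`. -/
def IsEtaBalanced {V : Type*} (G : SimpleGraph V) (η : ℕ) : Prop :=
  ∀ c d : G.ConnectedComponent, c.supp.ncard ≤ d.supp.ncard + η

/-- In a cluster graph, reachable vertices are equal or adjacent. -/
lemma cluster_reachable {V : Type*} {G : SimpleGraph V} (hG : IsClusterGraph G)
    {x y : V} (h : G.Reachable x y) : x = y ∨ G.Adj x y := by
  obtain ⟨w⟩ := h
  induction w with
  | nil => exact Or.inl rfl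
  | @cons a b c' h' p ih =>
    rcases ih with rfl | ha
    · exact Or.inr h'
    · rcases eq_or_ne a c' with rfl | hne
      · exact Or.inl rfl
      · exact Or.inr (hG h' ha hne)

theorem scomp_le_and_lcomp_le {V : Type*} [Fintype V]
    (G : SimpleGraph V) (F : Set (Sym2 V)) (k η : ℕ)
    (hG : IsClusterGraph G)
    (hnotbal : ¬ IsEtaBalanced G η)
    (hF : ∀ e ∈ F, ¬ e.IsDiag ∧ e ∉ G.edgeSet)
    (hcard : F.ncard ≤ k)
    (hGF : IsClusterGraph (addEdges G F))
    (hbal : IsEtaBalanced (addEdges G F) η) :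
    (∃ c : G.ConnectedComponent, c.supp.ncard ≤ k) ∧
    (∀ c : G.ConnectedComponent, c.supp.ncard ≤ 2 * k + η) := by
  classical
  simp only [IsEtaBalanced, not_forall, not_le] at hnotbal
  obtain ⟨c, d, hcd⟩ := hnotbal
  set H := addEdges G F with hHdef
  have hle : G ≤ H := le_sup_left
  -- components of G are contained in components of H
  have hmono : ∀ v : V, (G.connectedComponentMk v).supp ⊆ (H.connectedComponentMk v).supp := by
    intro v x hx
    rw [ConnectedComponent.mem_supp_iff, ConnectedComponent.eq] at hx ⊢
    exact hx.mono hle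
  -- key: two vertices in same H-component but different G-components give an F-edge
  have key : ∀ x y : V, H.connectedComponentMk x = H.connectedComponentMk y →
      G.connectedComponentMk x ≠ G.connectedComponentMk y → s(x, y) ∈ F := by
    intro x y hxy hne
    have hxney : x ≠ y := fun h => hne (by rw [h])
    have hreach : H.Reachable x y := (ConnectedComponent.eq).mp hxy
    have hadj : H.Adj x y := (cluster_reachable hGF hreach).resolve_left hxney
    rw [hHdef, addEdges, sup_adj, fromEdgeSet_adj] at hadj
    rcases hadj with hg | hf
    · exact absurd (ConnectedComponent.sound hg.reachable) hne
    · exact hf.1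
  obtain ⟨v₀, rfl⟩ := d.exists_rep
  obtain ⟨w₀, rfl⟩ := c.exists_rep
  set d := G.connectedComponentMk v₀
  set c := G.connectedComponentMk w₀
  set D := H.connectedComponentMk v₀ with hDdef
  set C := H.connectedComponentMk w₀ with hCdef
  have hcd : d.supp.ncard + η < c.supp.ncard := hcd
  have hFfin : F.Finite := Set.toFinite F
  have hcC : c.supp.ncard ≤ C.supp.ncard :=
    Set.ncard_le_ncard (hmono w₀) (Set.toFinite _)
  have hCD : C.supp.ncard ≤ D.supp.ncard + η := hbal C D
  have hdD : d.supp.ncard < D.supp.ncard := by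
    have := hcd.trans_le (hcC.trans hCD)
    omega
  -- get a vertex of D outside d
  have hsub : d.supp ⊆ D.supp := hmono v₀
  obtain ⟨u, huD, hud⟩ : ∃ u, u ∈ D.supp ∧ u ∉ d.supp := by
    by_contra h
    push_neg at h
    exact absurd (Set.ncard_le_ncard h (Set.toFinite _)) (not_le.mpr hdD)
  have hudG : G.connectedComponentMk u ≠ d := by
    rwa [ConnectedComponent.mem_supp_iff] at hud
  have huDH : H.connectedComponentMk u = D := by
    rwa [ConnectedComponent.mem_supp_iff] at huD
  have hv₀d : v₀ ∈ d.supp := by rw [ConnectedComponent.mem_supp_iff]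
  -- |d| ≤ k via v ↦ s(v, u)
  have hdk : d.supp.ncard ≤ k := by
    have : d.supp.ncard ≤ F.ncard := by
      apply Set.ncard_le_ncard_of_injOn (fun v => s(v, u))
      · intro v hv
        have hvD : H.connectedComponentMk v = D := by
          have := hsub hv
          rwa [ConnectedComponent.mem_supp_iff] at this
        have hvG : G.connectedComponentMk v = d := by
          rwa [ConnectedComponent.mem_supp_iff] at hv
        exact key v u (hvD.trans huDH.symm) (by rw [hvG]; exact fun h => hudG h.symm)
      · intro a _ b _ hab
        exact Sym2.congr_left.mp hab
    omega
  -- |D \ d| ≤ k via u' ↦ s(v₀, u')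
  have hDdk : (D.supp \ d.supp).ncard ≤ k := by
    have : (D.supp \ d.supp).ncard ≤ F.ncard := by
      apply Set.ncard_le_ncard_of_injOn (fun u' => s(v₀, u'))
      · rintro u' ⟨hu'D, hu'd⟩
        have hu'DH : H.connectedComponentMk u' = D := by
          rwa [ConnectedComponent.mem_supp_iff] at hu'D
        have hu'G : G.connectedComponentMk u' ≠ d := by
          rwa [ConnectedComponent.mem_supp_iff] at hu'd
        exact key v₀ u' (hu'DH.symm) (fun h => hu'G h.symm)
      · intro a _ b _ hab
        exact Sym2.congr_right.mp hab
    omega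
  have hDle : D.supp.ncard ≤ 2 * k := by
    have := Set.ncard_le_ncard_diff_add_ncard D.supp d.supp (Set.toFinite _)
    omega
  refine ⟨⟨d, hdk⟩, fun c' => ?_⟩
  obtain ⟨x, rfl⟩ := c'.exists_rep
  show (G.connectedComponentMk x).supp.ncard ≤ 2 * k + η
  have h1 : (G.connectedComponentMk x).supp.ncard ≤ (H.connectedComponentMk x).supp.ncard :=
    Set.ncard_le_ncard (hmono x) (Set.toFinite _)
  have h2 : (H.connectedComponentMk x).supp.ncard ≤ D.supp.ncard + η :=
    hbal _ D
  omega
end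

section
/- Let G be a graph, k a non-negative integer, and Q a maximal clique in G with at least k+2 vertices. If F ⊆ E(G) satisfies |F| ≤ k and G−F is a cluster graph, then the vertex set of Q is the vertex set of a connected component of G−F (and this component is a clique on V(Q)). -/
open SimpleGraph

lemma cluster_adj_of_reachable {V : Type*} {G : SimpleGraph V}
    (h : IsClusterGraph G) {u v : V} (hr : G.Reachable u v) (hne : u ≠ v) :
    G.Adj u v := by
  obtain ⟨p⟩ := hr
  induction p with
  | nil => exact absurd rfl hne
  | @cons a b c hab p ih =>
      by_cases hbc : b = c
      · subst hbc; exact hab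
      · exact h hab (ih hbc) hne

theorem maximal_clique_is_component_of_deleteEdges {V : Type*} [Fintype V]
    (G : SimpleGraph V) (k : ℕ) (Q : Set V)
    (hclique : G.IsClique Q)
    (hmax : ∀ Q' : Set V, G.IsClique Q' → Q ⊆ Q' → Q' = Q)
    (hbig : k + 2 ≤ Q.ncard)
    (F : Set (Sym2 V)) (hF : F ⊆ G.edgeSet) (hcard : F.ncard ≤ k)
    (hdel : IsClusterGraph (G.deleteEdges F)) :
    ∃ c : (G.deleteEdges F).ConnectedComponent,
      c.supp = Q ∧ (G.deleteEdges F).IsClique Q := by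
  classical
  set H := G.deleteEdges F with hH
  -- Step 1: any two distinct vertices of Q are reachable in H
  have key : ∀ u ∈ Q, ∀ v ∈ Q, u ≠ v → H.Reachable u v := by
    intro u hu v hv huv
    by_contra hnr
    -- s(u,v) ∈ F
    have huvF : s(u, v) ∈ F := by
      by_contra hne
      exact hnr ((SimpleGraph.deleteEdges_adj).2
        ⟨hclique hu hv huv, hne⟩).reachable
    set S : Set V := Q \ {u, v} with hS
    have hSfin : S.Finite := Set.toFinite _
    have hScard : k ≤ S.ncard := by
      have h1 : Q ⊆ S ∪ {u, v} := by
        intro x hx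
        by_cases hx2 : x ∈ ({u, v} : Set V)
        · exact Or.inr hx2
        · exact Or.inl ⟨hx, hx2⟩
      have h2 : Q.ncard ≤ S.ncard + 2 := by
        calc Q.ncard ≤ (S ∪ {u, v}).ncard := Set.ncard_le_ncard h1 (Set.toFinite _)
          _ ≤ S.ncard + ({u, v} : Set V).ncard := Set.ncard_union_le _ _
          _ ≤ S.ncard + 2 := by
              have : ({u, v} : Set V).ncard ≤ 2 := by
                apply le_trans (Set.ncard_insert_le _ _)
                simp
              omega
      omega
    set f : V → Sym2 V := fun w => if s(u, w) ∈ F then s(u, w) else s(v, w) with hf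
    have hfF : ∀ w ∈ S, f w ∈ F := by
      intro w hw
      simp only [hf]
      split_ifs with h1
      · exact h1
      · by_contra h2
        -- both edges present in H
        have hwu : w ≠ u := fun h => hw.2 (by simp [h])
        have hwv : w ≠ v := fun h => hw.2 (by simp [h])
        have a1 : H.Adj u w := (SimpleGraph.deleteEdges_adj).2
          ⟨hclique hu hw.1 (Ne.symm hwu), h1⟩
        have a2 : H.Adj w v := (SimpleGraph.deleteEdges_adj).2
          ⟨hclique hw.1 hv hwv, by rwa [Sym2.eq_swap]⟩
        exact hnr (a1.reachable.trans a2.reachable)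
    have hinj : Set.InjOn f S := by
      intro w hw w' hw' hww'
      have hwu : w ≠ u := fun h => hw.2 (by simp [h])
      have hwv : w ≠ v := fun h => hw.2 (by simp [h])
      have hw'u : w' ≠ u := fun h => hw'.2 (by simp [h])
      have hw'v : w' ≠ v := fun h => hw'.2 (by simp [h])
      simp only [hf] at hww'
      split_ifs at hww' with h1 h2 h2 <;>
        rw [Sym2.eq_iff] at hww' <;> tauto
    have hsub : insert s(u, v) (f '' S) ⊆ F := by
      intro e he
      rcases he with he | ⟨w, hw, rfl⟩
      · rw [he]; exact huvF
      · exact hfF w hw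
    have hnotmem : s(u, v) ∉ f '' S := by
      rintro ⟨w, hw, hfw⟩
      have hwu : w ≠ u := fun h => hw.2 (by simp [h])
      have hwv : w ≠ v := fun h => hw.2 (by simp [h])
      simp only [hf] at hfw
      split_ifs at hfw <;> rw [Sym2.eq_iff] at hfw <;> tauto
    have hcount : k + 1 ≤ F.ncard := by
      calc k + 1 ≤ S.ncard + 1 := by omega
        _ = (f '' S).ncard + 1 := by rw [Set.ncard_image_of_injOn hinj]
        _ = (insert s(u, v) (f '' S)).ncard := by
            rw [Set.ncard_insert_of_notMem hnotmem (Set.toFinite _)]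
        _ ≤ F.ncard := Set.ncard_le_ncard hsub (Set.toFinite _)
    omega
  -- Step 2: Q is nonempty
  have hQne : Q.Nonempty := by
    rw [← Set.ncard_pos]; omega
  obtain ⟨u, hu⟩ := hQne
  refine ⟨H.connectedComponentMk u, ?_, ?_⟩
  · -- supp = Q
    have hQsub : Q ⊆ (H.connectedComponentMk u).supp := by
      intro v hv
      simp only [ConnectedComponent.mem_supp_iff, ConnectedComponent.eq]
      by_cases hvu : v = u
      · subst hvu; exact Reachable.refl _
      · exact key v hv u hu hvu
    have hcliq : G.IsClique (H.connectedComponentMk u).supp := by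
      intro x hx y hy hxy
      have hr : H.Reachable x y := by
        simp only [ConnectedComponent.mem_supp_iff] at hx hy
        exact (ConnectedComponent.eq).1 (hx.trans hy.symm)
      exact (SimpleGraph.deleteEdges_adj).1
        (cluster_adj_of_reachable hdel hr hxy) |>.1
    exact hmax _ hcliq hQsub
  · -- Q is a clique in H
    intro x hx y hy hxy
    exact cluster_adj_of_reachable hdel (key x hx y hy hxy) hxy
end
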